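/- arXiv:2408.08266 — 2 statements merged into one kernel-verified Lean document; each statement's English description precedes it below -/
import Mathlib

section
/- Let $a_0, \dots, a_n$ be positive integers with $a_i \le d/2$ for all $i$, let $d \ge 3$, and let $t$ be a positive integer. Let $I = \{ i \in \{0, \dots, n\} : a_i = 1 \}$ and suppose $|I| > \frac{2t}{d-2}$. For $g$ a $d$-th root of unity with $g \ne 1$, let $J_g = \{ i : g^{a_i} \ne 1 \}$, $k_g = -\sum_{i \in J_g} a_i$, and $w_g = |J_g|$. Then $t - k_g - \frac{d \cdot w_g}{2} < 0$. -/
open Finset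
open scoped Classical

/-- Let `a₀,…,aₙ` be positive integers with `2aᵢ ≤ d`, `d ≥ 3`, and `t > 0`.
If the number of indices with `aᵢ = 1` exceeds `2t/(d-2)`, then for every
`d`-th root of unity `g ≠ 1`, with `J_g = {i : g^{aᵢ} ≠ 1}`,
`k_g = -∑_{i ∈ J_g} aᵢ` and `w_g = |J_g|`, one has `t - k_g - d·w_g/2 < 0`. -/
theorem stmt_1 (n d t : ℕ) (hd : 3 ≤ d) (ht : 0 < t)
    (a : Fin (n + 1) → ℕ) (hapos : ∀ i, 0 < a i) (hale : ∀ i, 2 * a i ≤ d)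
    (hI : (2 * (t : ℚ)) / ((d : ℚ) - 2) <
      ((Finset.univ.filter fun i => a i = 1).card : ℚ))
    (g : ℂ) (hg : g ^ d = 1) (hg1 : g ≠ 1) :
    (t : ℚ) - (-(∑ i ∈ Finset.univ.filter fun i : Fin (n + 1) => g ^ (a i) ≠ 1, (a i : ℚ)))
      - (d : ℚ) * ((Finset.univ.filter fun i : Fin (n + 1) => g ^ (a i) ≠ 1).card : ℚ) / 2
      < 0 := by
  set J := Finset.univ.filter fun i : Fin (n + 1) => g ^ (a i) ≠ 1 with hJ
  set I := Finset.univ.filter fun i : Fin (n + 1) => a i = 1 with hIdef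
  have hsub : I ⊆ J := by
    intro i hi
    simp only [hIdef, hJ, Finset.mem_filter, Finset.mem_univ, true_and] at hi ⊢
    rw [hi, pow_one]; exact hg1
  have hd2 : (0:ℚ) < (d:ℚ) - 2 := by
    have : (3:ℚ) ≤ (d:ℚ) := by exact_mod_cast hd
    linarith
  -- t < |I| * (d-2)/2
  have h1 : (t:ℚ) < (I.card : ℚ) * ((d:ℚ) - 2) / 2 := by
    rw [div_lt_iff₀ hd2] at hI
    linarith
  -- |I| * (d-2)/2 = ∑ i in I, (d/2 - a i)
  have h2' : ∀ i ∈ I, ((d:ℚ)/2 - (a i : ℚ)) = ((d:ℚ) - 2)/2 := by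
    intro i hi
    simp only [hIdef, Finset.mem_filter] at hi
    rw [hi.2]; push_cast; ring
  have h2 : ∑ i ∈ I, ((d:ℚ)/2 - (a i : ℚ)) = (I.card : ℚ) * (((d:ℚ) - 2) / 2) := by
    rw [Finset.sum_congr rfl h2', Finset.sum_const, nsmul_eq_mul]
  have h3 : ∑ i ∈ I, ((d:ℚ)/2 - (a i : ℚ)) ≤ ∑ i ∈ J, ((d:ℚ)/2 - (a i : ℚ)) := by
    apply Finset.sum_le_sum_of_subset_of_nonneg hsub
    intro i _ _
    have := hale i
    have : (2 * a i : ℚ) ≤ (d : ℚ) := by exact_mod_cast this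
    linarith
  have h4 : ∑ i ∈ J, ((d:ℚ)/2 - (a i : ℚ))
      = (d:ℚ) * (J.card : ℚ) / 2 - ∑ i ∈ J, (a i : ℚ) := by
    rw [Finset.sum_sub_distrib, Finset.sum_const, nsmul_eq_mul]
    ring
  linarith
end

section
/- Let $R = \mathbb{C}[a_{ij}, y]_{1 \le i, j \le 3}$ and let $\phi : R \to A$ be the ring homomorphism to $A = \mathbb{C}[x_1,x_2,x_3,y]/(3y^2 + g(x_1,x_2,x_3))$ (with $\deg x_i = 1$, $\deg y = 2$, $g$ homogeneous of degree $4$) defined by $\phi(a_{ij}) = x_i x_j$ and $\phi(y) = y$. Then the image of $\phi$ is the even-degree part $A^e$ of $A$, and $\ker \phi$ is generated by the elements $a_{ij} - a_{ji}$ (for $1 \le i, j \le 3$), $a_{ij}a_{kl} - a_{il}a_{kj}$ (for $1 \le i,j,k,l \le 3$), and $3y^2 + \bar{g}$, where $\bar{g}$ is any lift of $g$ along the map $\mathbb{C}[a_{ij}] \to \mathbb{C}[x_1,x_2,x_3]$, $a_{ij} \mapsto x_i x_j$. -/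
open MvPolynomial

noncomputable section

/-- The quotient `A = ℂ[x₁,x₂,x₃,y]/(3y² + g)`. -/
abbrev stmt6A (g : MvPolynomial (Fin 3) ℂ) :=
  MvPolynomial (Fin 4) ℂ ⧸
    Ideal.span {(C 3 * X 3 ^ 2 + rename Fin.castSucc g : MvPolynomial (Fin 4) ℂ)}

/-- The map `φ : ℂ[a_{ij}, y] → A`, `a_{ij} ↦ xᵢxⱼ`, `y ↦ y`. -/
def stmt6phi (g : MvPolynomial (Fin 3) ℂ) :
    MvPolynomial ((Fin 3 × Fin 3) ⊕ Unit) ℂ →ₐ[ℂ] stmt6A g :=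
  aeval fun v => match v with
    | Sum.inl q => Ideal.Quotient.mkₐ ℂ _ (X q.1.castSucc * X q.2.castSucc)
    | Sum.inr _ => Ideal.Quotient.mkₐ ℂ _ (X 3)

/-- The even-degree part of `A`, spanned by images of weighted-homogeneous
polynomials of even degree (weights `(1,1,1,2)`). -/
def stmt6Even (g : MvPolynomial (Fin 3) ℂ) : Submodule ℂ (stmt6A g) :=
  Submodule.span ℂ
    {a | ∃ p : MvPolynomial (Fin 4) ℂ, ∃ m : ℕ,
      p.IsWeightedHomogeneous (fun i : Fin 4 => if i = 3 then 2 else 1) (2 * m) ∧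
      a = Ideal.Quotient.mkₐ ℂ _ p}

namespace Stmt6Aux

abbrev σT := (Fin 3 × Fin 3) ⊕ Unit
abbrev RR := MvPolynomial σT ℂ
abbrev SS := MvPolynomial (Fin 4) ℂ

open scoped Classical

def wv : σT → (Fin 4 →₀ ℕ)
  | Sum.inl q => Finsupp.single q.1.castSucc 1 + Finsupp.single q.2.castSucc 1
  | Sum.inr _ => Finsupp.single 3 1

def G1 : Set RR := {q | ∃ i j : Fin 3, q = X (Sum.inl (i, j)) - X (Sum.inl (j, i))}
def G2 : Set RR := {q | ∃ i j k l : Fin 3,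
    q = X (Sum.inl (i, j)) * X (Sum.inl (k, l)) - X (Sum.inl (i, l)) * X (Sum.inl (k, j))}

def J0 : Ideal RR := Ideal.span (G1 ∪ G2)

abbrev Q0 := RR ⧸ J0
def π0 : RR →ₐ[ℂ] Q0 := Ideal.Quotient.mkₐ ℂ J0

lemma pi_sym (i j : Fin 3) : π0 (X (Sum.inl (i, j))) = π0 (X (Sum.inl (j, i))) := by
  show Ideal.Quotient.mk J0 _ = Ideal.Quotient.mk J0 _
  rw [Ideal.Quotient.mk_eq_mk_iff_sub_mem]
  exact Ideal.subset_span (Or.inl ⟨i, j, rfl⟩)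

lemma pi_minor (i j k l : Fin 3) :
    π0 (X (Sum.inl (i, j)) * X (Sum.inl (k, l))) =
    π0 (X (Sum.inl (i, l)) * X (Sum.inl (k, j))) := by
  show Ideal.Quotient.mk J0 _ = Ideal.Quotient.mk J0 _
  rw [Ideal.Quotient.mk_eq_mk_iff_sub_mem]
  exact Ideal.subset_span (Or.inr ⟨i, j, k, l, rfl⟩)

def wS (s : Multiset σT) : Fin 4 →₀ ℕ := (s.map wv).sum
def mprod (s : Multiset σT) : RR := (s.map X).prod

@[simp] lemma mprod_zero : mprod 0 = 1 := by simp [mprod]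
@[simp] lemma mprod_cons (v : σT) (s : Multiset σT) :
    mprod (v ::ₘ s) = X v * mprod s := by simp [mprod]
@[simp] lemma wS_zero : wS 0 = 0 := by simp [wS]
@[simp] lemma wS_cons (v : σT) (s : Multiset σT) : wS (v ::ₘ s) = wv v + wS s := by
  simp [wS]

lemma castSucc_ne_three (i : Fin 3) : i.castSucc ≠ (3 : Fin 4) := by
  fin_cases i <;> decide

lemma wv_inl_apply (i j : Fin 3) (c : Fin 4) :
    wv (Sum.inl (i, j)) c =
      (if i.castSucc = c then 1 else 0) + (if j.castSucc = c then 1 else 0) := by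
  simp [wv, Finsupp.single_apply]

lemma wv_swap (i j : Fin 3) : wv (Sum.inl (i, j)) = wv (Sum.inl (j, i)) := by
  simp only [wv]; exact add_comm _ _

lemma flip_cong (i j : Fin 3) (u : Multiset σT) :
    π0 (mprod (Sum.inl (i, j) ::ₘ u)) = π0 (mprod (Sum.inl (j, i) ::ₘ u)) := by
  rw [mprod_cons, mprod_cons, map_mul, map_mul, pi_sym]

lemma minor_cong (i j k l : Fin 3) (u : Multiset σT) :
    π0 (mprod (Sum.inl (i, j) ::ₘ Sum.inl (k, l) ::ₘ u)) =
    π0 (mprod (Sum.inl (i, l) ::ₘ Sum.inl (k, j) ::ₘ u)) := by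
  simp only [mprod_cons, ← mul_assoc, map_mul, pi_minor i j k l]

lemma exists_inr_mem (t : Multiset σT) (h : wS t 3 ≠ 0) : Sum.inr () ∈ t := by
  induction t using Multiset.induction_on with
  | empty => simp at h
  | cons a t ih =>
      rw [wS_cons, Finsupp.add_apply] at h
      rcases a with q | u
      · have : wv (Sum.inl q) 3 = 0 := by
          rw [wv_inl_apply, if_neg (castSucc_ne_three _), if_neg (castSucc_ne_three _)]
        rw [this, zero_add] at h
        exact Multiset.mem_cons_of_mem (ih h)
      · exact Multiset.mem_cons_self _ _

lemma exists_inl_mem (t : Multiset σT) (i : Fin 3) (h : wS t i.castSucc ≠ 0) :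
    ∃ r : Fin 3, Sum.inl (i, r) ∈ t ∨ Sum.inl (r, i) ∈ t := by
  induction t using Multiset.induction_on with
  | empty => simp at h
  | cons a t ih =>
      rw [wS_cons, Finsupp.add_apply] at h
      by_cases ha : wv a i.castSucc = 0
      · rw [ha, zero_add] at h
        obtain ⟨r, hr⟩ := ih h
        exact ⟨r, hr.imp Multiset.mem_cons_of_mem Multiset.mem_cons_of_mem⟩
      · rcases a with ⟨p, q⟩ | u
        · rw [wv_inl_apply] at ha
          by_cases hp : p = i
          · exact ⟨q, Or.inl (by rw [← hp]; exact Multiset.mem_cons_self _ _)⟩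
          · have hq : q = i := by
              by_contra hq
              apply ha
              rw [if_neg (by simpa [Fin.castSucc_inj] using hp),
                if_neg (by simpa [Fin.castSucc_inj] using hq)]
            exact ⟨p, Or.inr (by rw [← hq]; exact Multiset.mem_cons_self _ _)⟩
        · exact absurd (by simp [wv, Finsupp.single_apply,
            (castSucc_ne_three i).symm]) ha

/-- extract a factor containing `i` (in first position, after flipping) -/
lemma extract (t : Multiset σT) (i : Fin 3) (h : wS t i.castSucc ≠ 0) :
    ∃ (r : Fin 3) (t' : Multiset σT), t.card = t'.card + 1 ∧
      wS t = wv (Sum.inl (i, r)) + wS t' ∧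
      π0 (mprod t) = π0 (mprod (Sum.inl (i, r) ::ₘ t')) := by
  obtain ⟨r, hr | hr⟩ := exists_inl_mem t i h
  · refine ⟨r, t.erase (Sum.inl (i, r)), ?_, ?_, ?_⟩
    · rw [← Multiset.card_cons, Multiset.cons_erase hr]
    · conv_lhs => rw [← Multiset.cons_erase hr]
      rw [wS_cons]
    · conv_lhs => rw [← Multiset.cons_erase hr]
  · refine ⟨r, t.erase (Sum.inl (r, i)), ?_, ?_, ?_⟩
    · rw [← Multiset.card_cons, Multiset.cons_erase hr]
    · conv_lhs => rw [← Multiset.cons_erase hr]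
      rw [wS_cons, wv_swap]
    · conv_lhs => rw [← Multiset.cons_erase hr]
      rw [flip_cong]

lemma wS_ne_zero (t : Multiset σT) (h : t ≠ 0) : wS t ≠ 0 := by
  obtain ⟨a, ha⟩ := Multiset.exists_mem_of_ne_zero h
  obtain ⟨t', rfl⟩ := Multiset.exists_cons_of_mem ha
  intro hz
  rcases a with ⟨p, q⟩ | u
  · have := DFunLike.congr_fun hz p.castSucc
    rw [wS_cons, Finsupp.add_apply, wv_inl_apply, if_pos rfl] at this
    simp at this
  · have := DFunLike.congr_fun hz (3 : Fin 4)
    rw [wS_cons, Finsupp.add_apply] at this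
    simp [wv, Finsupp.single_apply] at this

/-- Main combinatorial lemma -/
lemma main_cong : ∀ (n : ℕ) (s t : Multiset σT), s.card = n → wS s = wS t →
    π0 (mprod s) = π0 (mprod t) := by
  intro n
  induction n with
  | zero =>
      intro s t hs hw
      rw [Multiset.card_eq_zero] at hs
      subst hs
      rw [wS_zero] at hw
      have ht : t = 0 := by
        by_contra h0
        exact wS_ne_zero t h0 hw.symm
      rw [ht]
  | succ n ih =>
      intro s t hs hw
      have hsne : s ≠ 0 := by
        intro h0; rw [h0, Multiset.card_zero] at hs; omega
      obtain ⟨a, ha⟩ := Multiset.exists_mem_of_ne_zero hsne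
      obtain ⟨s₁, rfl⟩ := Multiset.exists_cons_of_mem ha
      have hcard : s₁.card = n := by
        rw [Multiset.card_cons] at hs; omega
      rcases a with ⟨i, j⟩ | u
      · -- s = inl (i,j) ::ₘ s₁
        have hti : wS t i.castSucc ≠ 0 := by
          rw [← hw, wS_cons, Finsupp.add_apply, wv_inl_apply, if_pos rfl]
          omega
        obtain ⟨r, t₁, htc, htw, hte⟩ := extract t i hti
        by_cases hrj : r = j
        · subst hrj
          have : wS s₁ = wS t₁ := by
            rw [wS_cons, htw] at hw
            exact add_left_cancel hw
          rw [hte, mprod_cons, mprod_cons, map_mul, map_mul, ih s₁ t₁ hcard this]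
        · -- r ≠ j; find j inside t₁
          have htj : wS t₁ j.castSucc ≠ 0 := by
            have h1 := DFunLike.congr_fun hw j.castSucc
            rw [wS_cons, Finsupp.add_apply, htw, Finsupp.add_apply,
              wv_inl_apply, wv_inl_apply] at h1
            simp only [Fin.castSucc_inj] at h1
            rw [if_neg hrj] at h1
            simp only [eq_self_iff_true, if_true] at h1
            by_cases hij : i = j
            · rw [if_pos hij] at h1; omega
            · rw [if_neg hij] at h1; omega
          obtain ⟨u', t₂, htc2, htw2, hte2⟩ := extract t₁ j htj
          -- now  π0 (mprod t) = π0 (mprod (inl (i,r) ::ₘ inl (j,u') ::ₘ t₂))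
          have key : π0 (mprod t) =
              π0 (mprod (Sum.inl (i, j) ::ₘ Sum.inl (u', r) ::ₘ t₂)) := by
            rw [hte, mprod_cons, map_mul, hte2, ← map_mul, ← mprod_cons]
            rw [Multiset.cons_swap]
            rw [flip_cong j u' (Sum.inl (i, r) ::ₘ t₂)]
            rw [Multiset.cons_swap]
            exact minor_cong i r u' j t₂
          have hwkey : wS s₁ = wS (Sum.inl (u', r) ::ₘ t₂) := by
            have : wS t = wv (Sum.inl (i, j)) + wS (Sum.inl (u', r) ::ₘ t₂) := by
              rw [htw, htw2, wS_cons]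
              simp only [wv]
              ext c
              simp only [Finsupp.add_apply]
              ring
            rw [this, wS_cons] at hw
            exact add_left_cancel hw
          rw [key, mprod_cons, mprod_cons, map_mul, map_mul,
            ih s₁ _ hcard hwkey]
      · -- a = inr
        have hti : wS t 3 ≠ 0 := by
          rw [← hw, wS_cons, Finsupp.add_apply]
          simp [wv, Finsupp.single_apply]
        obtain ht := exists_inr_mem t hti
        obtain ⟨t₁, rfl⟩ := Multiset.exists_cons_of_mem ht
        have : wS s₁ = wS t₁ := by
          rw [wS_cons, wS_cons] at hw
          exact add_left_cancel hw
        rw [mprod_cons, mprod_cons, map_mul, map_mul, ih s₁ t₁ hcard this]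

/- ### monomial-level lemmas -/

def wF (m : σT →₀ ℕ) : Fin 4 →₀ ℕ := wS m.toMultiset

lemma mprod_eq (s : Multiset σT) : mprod s = monomial s.toFinsupp 1 := by
  induction s using Multiset.induction_on with
  | empty => simp [monomial_zero']
  | cons a s ih =>
      rw [mprod_cons, ih, X, monomial_mul, one_mul, ← Multiset.singleton_add,
        Multiset.toFinsupp_add, Multiset.toFinsupp_singleton]

lemma monomial_eq_mprod (m : σT →₀ ℕ) : monomial m 1 = mprod m.toMultiset := by
  rw [mprod_eq, Finsupp.toMultiset_toFinsupp]

def ψ : RR →ₐ[ℂ] SS := aeval fun v => match v with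
  | Sum.inl q => X q.1.castSucc * X q.2.castSucc
  | Sum.inr _ => X 3

lemma psi_X (v : σT) : ψ (X v) = monomial (wv v) 1 := by
  cases v with
  | inl q =>
    simp only [ψ, aeval_X, wv]
    rw [X, X, monomial_mul, one_mul]
  | inr u => simp only [ψ, aeval_X, wv]; rw [X]

lemma psi_mprod (s : Multiset σT) : ψ (mprod s) = monomial (wS s) 1 := by
  induction s using Multiset.induction_on with
  | empty => simp [monomial_zero']
  | cons a s ih =>
      rw [mprod_cons, map_mul, ih, psi_X, monomial_mul, one_mul, wS_cons]

lemma psi_monomial (m : σT →₀ ℕ) (c : ℂ) : ψ (monomial m c) = monomial (wF m) c := by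
  have h1 : (monomial m c : RR) = c • monomial m 1 := by
    rw [smul_monomial, smul_eq_mul, mul_one]
  have h2 : (monomial (wF m) c : SS) = c • monomial (wF m) 1 := by
    rw [smul_monomial, smul_eq_mul, mul_one]
  rw [h1, h2, map_smul, monomial_eq_mprod, psi_mprod, wF]

lemma main_cong_monomial (m m' : σT →₀ ℕ) (h : wF m = wF m') :
    π0 (monomial m 1) = π0 (monomial m' 1) := by
  rw [monomial_eq_mprod, monomial_eq_mprod]
  exact main_cong m.toMultiset.card _ _ rfl h

/-- representative choice -/
def rep (β : Fin 4 →₀ ℕ) : σT →₀ ℕ :=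
  if h : ∃ m : σT →₀ ℕ, wF m = β then h.choose else 0

lemma wF_rep {β : Fin 4 →₀ ℕ} (h : ∃ m : σT →₀ ℕ, wF m = β) : wF (rep β) = β := by
  rw [rep, dif_pos h]; exact h.choose_spec

/-- the linear section -/
def L : SS →ₗ[ℂ] Q0 :=
  (MvPolynomial.basisMonomials (Fin 4) ℂ).constr ℂ fun β => π0 (monomial (rep β) 1)

lemma L_monomial (β : Fin 4 →₀ ℕ) : L (monomial β 1) = π0 (monomial (rep β) 1) := by
  have := Module.Basis.constr_basis (MvPolynomial.basisMonomials (Fin 4) ℂ) ℂ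
    (fun β => π0 (monomial (rep β) 1)) β
  rwa [coe_basisMonomials] at this

lemma L_psi (p : RR) : L (ψ p) = π0 p := by
  conv_lhs => rw [← support_sum_monomial_coeff p]
  conv_rhs => rw [← support_sum_monomial_coeff p]
  simp only [map_sum]
  refine Finset.sum_congr rfl fun m _ => ?_
  rw [psi_monomial]
  have h1 : (monomial (wF m) (coeff m p) : SS) = (coeff m p) • monomial (wF m) 1 := by
    rw [smul_monomial, smul_eq_mul, mul_one]
  have h2 : (monomial m (coeff m p) : RR) = (coeff m p) • monomial m 1 := by
    rw [smul_monomial, smul_eq_mul, mul_one]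
  rw [h1, h2, map_smul, map_smul, L_monomial]
  congr 1
  exact main_cong_monomial _ _ (wF_rep ⟨m, rfl⟩)

lemma ker_psi_le : RingHom.ker (ψ : RR →ₐ[ℂ] SS).toRingHom ≤ J0 := by
  intro p hp
  have : ψ p = 0 := hp
  have h2 := L_psi p
  rw [this, map_zero] at h2
  have h3 : Ideal.Quotient.mk J0 p = 0 := by
    have : π0 p = 0 := h2.symm
    rw [show π0 p = Ideal.Quotient.mk J0 p from rfl] at this
    exact this
  exact Ideal.Quotient.eq_zero_iff_mem.mp h3

/- ### weights and parity -/

abbrev wtN : Fin 4 → ℕ := fun i => if i = 3 then 2 else 1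
abbrev wt2 : Fin 4 → ZMod 2 := fun i => if i = 3 then 0 else 1

lemma weight_eval {M : Type*} [AddCommMonoid M] (w : Fin 4 → M) (β : Fin 4 →₀ ℕ) :
    Finsupp.weight w β = β 0 • w 0 + β 1 • w 1 + β 2 • w 2 + β 3 • w 3 := by
  rw [Finsupp.weight_apply, Finsupp.sum_fintype _ _ (fun i => zero_smul ℕ (w i)),
    Fin.sum_univ_four]

lemma weight_wtN (β : Fin 4 →₀ ℕ) :
    Finsupp.weight wtN β = β 0 + β 1 + β 2 + 2 * β 3 := by
  rw [weight_eval]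
  simp [wtN]
  ring

lemma weight_wt2 (β : Fin 4 →₀ ℕ) :
    Finsupp.weight wt2 β = ((β 0 + β 1 + β 2 : ℕ) : ZMod 2) := by
  rw [weight_eval]
  simp [wt2]

lemma weight_wt2_eq_zero_iff (β : Fin 4 →₀ ℕ) :
    Finsupp.weight wt2 β = 0 ↔ 2 ∣ (β 0 + β 1 + β 2) := by
  rw [weight_wt2, ZMod.natCast_eq_zero_iff]

lemma first3_wv_inl (i j : Fin 3) :
    wv (Sum.inl (i, j)) 0 + wv (Sum.inl (i, j)) 1 + wv (Sum.inl (i, j)) 2 = 2 := by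
  simp only [wv_inl_apply]
  fin_cases i <;> fin_cases j <;> decide

lemma first3_wv_inr (u : Unit) :
    wv (Sum.inr u) 0 + wv (Sum.inr u) 1 + wv (Sum.inr u) 2 = 0 := by
  simp [wv, Finsupp.single_apply]

lemma wS_first3_even (s : Multiset σT) : 2 ∣ (wS s 0 + wS s 1 + wS s 2) := by
  induction s using Multiset.induction_on with
  | empty => simp
  | cons a s ih =>
      simp only [wS_cons, Finsupp.add_apply]
      rcases a with q | u
      · obtain ⟨i, j⟩ := q
        have := first3_wv_inl i j
        omega
      · have := first3_wv_inr u
        omega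

lemma wF_first3_even (m : σT →₀ ℕ) : 2 ∣ (wF m 0 + wF m 1 + wF m 2) :=
  wS_first3_even _

@[simp] lemma wS_add (s t : Multiset σT) : wS (s + t) = wS s + wS t := by
  simp [wS]

@[simp] lemma wS_replicate (k : ℕ) (v : σT) : wS (Multiset.replicate k v) = k • wv v := by
  simp [wS, Multiset.map_replicate, Multiset.sum_replicate]

@[simp] lemma wS_singleton (v : σT) : wS {v} = wv v := by
  simp [wS]

lemma exists_wS (β : Fin 4 →₀ ℕ) (h : 2 ∣ (β 0 + β 1 + β 2)) :
    ∃ s : Multiset σT, wS s = β := by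
  classical
  refine ⟨Multiset.replicate (β 0 / 2) (Sum.inl (0, 0)) +
    Multiset.replicate (β 1 / 2) (Sum.inl (1, 1)) +
    Multiset.replicate (β 2 / 2) (Sum.inl (2, 2)) +
    Multiset.replicate (β 3) (Sum.inr ()) +
    (if 2 ∣ β 0 then (if 2 ∣ β 1 then 0 else {Sum.inl (1, 2)})
      else (if 2 ∣ β 1 then {Sum.inl (0, 2)} else {Sum.inl (0, 1)})), ?_⟩
  by_cases h0 : 2 ∣ β 0 <;> by_cases h1 : 2 ∣ β 1 <;>
    simp only [h0, h1, if_true, if_false] <;>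
    · ext c
      fin_cases c <;>
        simp [wS_add, wS_replicate, wS_singleton, wS_zero, wv,
            Finsupp.add_apply, Finsupp.smul_apply, Finsupp.single_apply,
            smul_eq_mul, show ((0:Fin 3).castSucc : Fin 4) = 0 from rfl,
            show ((1:Fin 3).castSucc : Fin 4) = 1 from rfl,
            show ((2:Fin 3).castSucc : Fin 4) = 2 from rfl] <;>
        omega

lemma exists_wF (β : Fin 4 →₀ ℕ) (h : 2 ∣ (β 0 + β 1 + β 2)) :
    ∃ m : σT →₀ ℕ, wF m = β := by
  obtain ⟨s, hs⟩ := exists_wS β h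
  exact ⟨s.toFinsupp, by rw [wF, Multiset.toFinsupp_toMultiset, hs]⟩


/- ### the polynomial f and its lift F -/

variable (g : MvPolynomial (Fin 3) ℂ) (gbar : MvPolynomial (Fin 3 × Fin 3) ℂ)

def fS : SS := C 3 * X 3 ^ 2 + rename Fin.castSucc g

def Fbig : RR := C 3 * X (Sum.inr ()) ^ 2 + rename Sum.inl gbar

lemma psi_rename : ψ (rename Sum.inl gbar) =
    rename Fin.castSucc (aeval (fun q : Fin 3 × Fin 3 =>
      (X q.1 * X q.2 : MvPolynomial (Fin 3) ℂ)) gbar) := by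
  rw [ψ, aeval_rename, ← AlgHom.comp_apply, comp_aeval]
  exact congrFun (congrArg DFunLike.coe (congrArg MvPolynomial.aeval
    (funext fun q => by simp [Function.comp, rename_X]))) gbar

lemma psi_F (hgbar : aeval (fun q : Fin 3 × Fin 3 =>
    (X q.1 * X q.2 : MvPolynomial (Fin 3) ℂ)) gbar = g) : ψ (Fbig gbar) = fS g := by
  rw [Fbig, fS, map_add, map_mul, map_pow, psi_rename, hgbar]
  refine congrArg₂ (· + ·) (congrArg₂ (· * ·) ?_ ?_) rfl
  · simp [ψ]
  · simp [ψ]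

lemma phi_eq : stmt6phi g = (Ideal.Quotient.mkₐ ℂ (Ideal.span {fS g})).comp ψ := by
  rw [stmt6phi, ψ, comp_aeval]
  congr 1
  funext v
  cases v <;> rfl

lemma weight_eval3 {M : Type*} [AddCommMonoid M] (w : Fin 3 → M) (β : Fin 3 →₀ ℕ) :
    Finsupp.weight w β = β 0 • w 0 + β 1 • w 1 + β 2 • w 2 := by
  rw [Finsupp.weight_apply, Finsupp.sum_fintype _ _ (fun i => zero_smul ℕ (w i)),
    Fin.sum_univ_three]

lemma three_not_range : (3 : Fin 4) ∉ Set.range (Fin.castSucc : Fin 3 → Fin 4) := by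
  rintro ⟨x, hx⟩
  fin_cases x <;> exact absurd hx (by decide)

lemma rename_g_even (hg : g.IsHomogeneous 4) :
    (rename Fin.castSucc g : SS).IsWeightedHomogeneous wt2 0 := by
  intro d hd
  obtain ⟨u, hu, hcu⟩ := coeff_rename_ne_zero _ _ _ hd
  have h4 : u 0 + u 1 + u 2 = 4 := by
    have := hg hcu
    rw [weight_eval3] at this
    simpa using this
  have hd0 : d 0 = u 0 := by
    rw [← hu, show ((0 : Fin 4)) = Fin.castSucc 0 from rfl,
      Finsupp.mapDomain_apply (Fin.castSucc_injective 3)]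
  have hd1 : d 1 = u 1 := by
    rw [← hu, show ((1 : Fin 4)) = Fin.castSucc 1 from rfl,
      Finsupp.mapDomain_apply (Fin.castSucc_injective 3)]
  have hd2 : d 2 = u 2 := by
    rw [← hu, show ((2 : Fin 4)) = Fin.castSucc 2 from rfl,
      Finsupp.mapDomain_apply (Fin.castSucc_injective 3)]
  rw [weight_wt2, hd0, hd1, hd2, h4]
  decide

lemma fS_even (hg : g.IsHomogeneous 4) : (fS g).IsWeightedHomogeneous wt2 0 := by
  rw [fS, C_mul_X_pow_eq_monomial]
  have h1 : (monomial (Finsupp.single (3 : Fin 4) 2) (3 : ℂ) : SS).IsWeightedHomogeneous wt2 0 := by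
    apply isWeightedHomogeneous_monomial
    rw [weight_wt2]
    simp [Finsupp.single_apply]
  rw [← mem_weightedHomogeneousSubmodule]
  exact Submodule.add_mem _ (mem_weightedHomogeneousSubmodule _ _ _ _ |>.mpr h1)
    ((mem_weightedHomogeneousSubmodule _ _ _ _).mpr (rename_g_even g hg))

lemma fS_ne_zero : fS g ≠ 0 := by
  intro h0
  have h1 : coeff (Finsupp.single (3 : Fin 4) 2) (fS g) = 3 := by
    rw [fS, C_mul_X_pow_eq_monomial, coeff_add, coeff_monomial, if_pos rfl]
    have h2 : coeff (Finsupp.single (3 : Fin 4) 2) (rename Fin.castSucc g : SS) = 0 := by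
      by_contra hc
      obtain ⟨u, hu, _⟩ := coeff_rename_ne_zero _ _ _ hc
      have := Finsupp.mapDomain_notin_range u (3 : Fin 4) three_not_range
      rw [hu] at this
      simp [Finsupp.single_apply] at this
    rw [h2, add_zero]
  rw [h0, coeff_zero] at h1
  exact three_ne_zero h1.symm

/- ### even polynomials and the image of ψ -/

lemma psi_mem_even (p : RR) : (ψ p).IsWeightedHomogeneous wt2 0 := by
  rw [← mem_weightedHomogeneousSubmodule, ← support_sum_monomial_coeff p, map_sum]
  refine Submodule.sum_mem _ fun m _ => ?_
  rw [mem_weightedHomogeneousSubmodule, psi_monomial]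
  exact isWeightedHomogeneous_monomial _ _ _
    ((weight_wt2_eq_zero_iff _).mpr (wF_first3_even m))

lemma even_mem_range {p : SS} (hp : p.IsWeightedHomogeneous wt2 0) :
    ∃ r : RR, ψ r = p := by
  refine ⟨∑ β ∈ p.support, monomial (rep β) (coeff β p), ?_⟩
  rw [map_sum]
  conv_rhs => rw [← support_sum_monomial_coeff p]
  refine Finset.sum_congr rfl fun β hβ => ?_
  rw [psi_monomial, wF_rep (exists_wF β ((weight_wt2_eq_zero_iff β).mp
    (hp (mem_support_iff.mp hβ))))]

lemma decomp2 (c : SS) : weightedHomogeneousComponent wt2 0 c +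
    weightedHomogeneousComponent wt2 1 c = c := by
  classical
  ext d
  simp only [coeff_add, coeff_weightedHomogeneousComponent]
  have hx : ∀ x : ZMod 2, x = 0 ∨ x = 1 := by decide
  rcases hx (Finsupp.weight wt2 d) with h | h
  · rw [if_pos h, if_neg (by rw [h]; decide), add_zero]
  · rw [if_neg (by rw [h]; decide), if_pos h, zero_add]

lemma wh_zero_one {p : SS} (h0 : p.IsWeightedHomogeneous wt2 0)
    (h1 : p.IsWeightedHomogeneous wt2 1) : p = 0 := by
  by_contra hne
  obtain ⟨d, hd⟩ := ne_zero_iff.mp hne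
  have := (h0 hd).symm.trans (h1 hd)
  exact absurd this (by decide)


end Stmt6Aux

open Stmt6Aux in
/-- The image of `φ` is the even part `Aᵉ` and its kernel is generated by
`a_{ij} - a_{ji}`, `a_{ij}a_{kl} - a_{il}a_{kj}` and `3y² + ḡ`, for `ḡ` any
lift of `g` along `a_{ij} ↦ xᵢxⱼ`. -/
theorem stmt_6 (g : MvPolynomial (Fin 3) ℂ) (hg : g.IsHomogeneous 4)
    (gbar : MvPolynomial (Fin 3 × Fin 3) ℂ)
    (hgbar : aeval (fun q : Fin 3 × Fin 3 => (X q.1 * X q.2 : MvPolynomial (Fin 3) ℂ))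
      gbar = g) :
    Subalgebra.toSubmodule (stmt6phi g).range = stmt6Even g ∧
    RingHom.ker (stmt6phi g).toRingHom =
      Ideal.span
        (({q | ∃ i j : Fin 3, q = X (Sum.inl (i, j)) - X (Sum.inl (j, i))} ∪
          {q | ∃ i j k l : Fin 3,
            q = X (Sum.inl (i, j)) * X (Sum.inl (k, l))
              - X (Sum.inl (i, l)) * X (Sum.inl (k, j))} ∪
          {C 3 * X (Sum.inr ()) ^ 2 + rename Sum.inl gbar}) :
            Set (MvPolynomial ((Fin 3 × Fin 3) ⊕ Unit) ℂ)) := by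
  constructor
  · -- Part 1 : image = even part
    apply le_antisymm
    · intro x hx
      rw [Subalgebra.mem_toSubmodule, AlgHom.mem_range] at hx
      obtain ⟨p, rfl⟩ := hx
      rw [← support_sum_monomial_coeff p, map_sum]
      refine Submodule.sum_mem _ fun m _ => ?_
      have h1 : stmt6phi g (monomial m (coeff m p)) =
          Ideal.Quotient.mkₐ ℂ (Ideal.span {fS g}) (monomial (wF m) (coeff m p)) := by
        rw [phi_eq g]
        show Ideal.Quotient.mkₐ ℂ (Ideal.span {fS g}) (ψ (monomial m (coeff m p))) = _
        rw [psi_monomial]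
      have h2 : (monomial (wF m) (coeff m p) : MvPolynomial (Fin 4) ℂ)
          = (coeff m p) • monomial (wF m) 1 := by
        rw [smul_monomial, smul_eq_mul, mul_one]
      rw [h1, h2, map_smul]
      refine Submodule.smul_mem _ _ ?_
      rw [stmt6Even]
      refine Submodule.subset_span ?_
      obtain ⟨k, hk⟩ := wF_first3_even m
      refine ⟨monomial (wF m) 1, k + wF m 3, ?_, rfl⟩
      apply isWeightedHomogeneous_monomial
      rw [show (fun i : Fin 4 => if i = 3 then (2:ℕ) else 1) = wtN from rfl, weight_wtN]
      omega
    · rw [stmt6Even, Submodule.span_le]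
      rintro x ⟨p, k, hph, rfl⟩
      rw [SetLike.mem_coe, Subalgebra.mem_toSubmodule]
      show Ideal.Quotient.mkₐ ℂ (Ideal.span {fS g}) p ∈ (stmt6phi g).range
      have hsum : Ideal.Quotient.mkₐ ℂ (Ideal.span {fS g}) p =
          ∑ β ∈ p.support,
            Ideal.Quotient.mkₐ ℂ (Ideal.span {fS g}) (monomial β (coeff β p)) := by
        rw [← map_sum, support_sum_monomial_coeff]
      rw [hsum]
      refine Subalgebra.sum_mem (stmt6phi g).range fun β hβ => ?_
      have hev : 2 ∣ (β 0 + β 1 + β 2) := by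
        have h4 := hph (mem_support_iff.mp hβ)
        rw [show (fun i : Fin 4 => if i = 3 then (2:ℕ) else 1) = wtN from rfl,
          weight_wtN] at h4
        omega
      obtain ⟨m, hm⟩ := exists_wF β hev
      refine ((stmt6phi g).mem_range).mpr ?_
      refine ⟨monomial m (coeff β p), ?_⟩
      rw [phi_eq g]
      show Ideal.Quotient.mkₐ ℂ (Ideal.span {fS g}) (ψ (monomial m (coeff β p))) = _
      rw [psi_monomial, hm]
  · -- Part 2 : kernel
    have hset : (({q | ∃ i j : Fin 3, q = X (Sum.inl (i, j)) - X (Sum.inl (j, i))} ∪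
          {q | ∃ i j k l : Fin 3,
            q = X (Sum.inl (i, j)) * X (Sum.inl (k, l))
              - X (Sum.inl (i, l)) * X (Sum.inl (k, j))} ∪
          {C 3 * X (Sum.inr ()) ^ 2 + rename Sum.inl gbar}) :
            Set (MvPolynomial ((Fin 3 × Fin 3) ⊕ Unit) ℂ)) =
        G1 ∪ G2 ∪ {Fbig gbar} := rfl
    rw [hset]
    apply le_antisymm
    · -- ker ≤ span
      intro p hp
      have h0 : stmt6phi g p = 0 := hp
      rw [phi_eq g] at h0
      have hψp : ψ p ∈ Ideal.span {fS g} :=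
        Ideal.Quotient.eq_zero_iff_mem.mp h0
      obtain ⟨c, hc⟩ := Ideal.mem_span_singleton.mp hψp
      obtain ⟨c0, c1, hc0, hc1h, hsum⟩ : ∃ c0 c1 : MvPolynomial (Fin 4) ℂ,
          c0.IsWeightedHomogeneous wt2 0 ∧ c1.IsWeightedHomogeneous wt2 1 ∧
          c = c0 + c1 :=
        ⟨_, _, weightedHomogeneousComponent_isWeightedHomogeneous 0 c,
          weightedHomogeneousComponent_isWeightedHomogeneous 1 c, (decomp2 c).symm⟩
      have hfc1 : fS g * c1 = 0 := by
        apply wh_zero_one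
        · have he : fS g * c1 = ψ p - fS g * c0 := by
            rw [hc, hsum]; ring
          rw [← mem_weightedHomogeneousSubmodule, he]
          refine Submodule.sub_mem _ ?_ ?_
          · exact (mem_weightedHomogeneousSubmodule _ _ _ _).mpr (psi_mem_even p)
          · exact (mem_weightedHomogeneousSubmodule _ _ _ _).mpr
              (by simpa using (fS_even g hg).mul hc0)
        · simpa using (fS_even g hg).mul hc1h
      have hc1z : c1 = 0 := by
        rcases mul_eq_zero.mp hfc1 with h | h
        · exact absurd h (fS_ne_zero g)
        · exact h
      obtain ⟨r, hr⟩ := even_mem_range hc0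
      have hker : (p - Fbig gbar * r) ∈ RingHom.ker (ψ : RR →ₐ[ℂ] SS).toRingHom := by
        show ψ (p - Fbig gbar * r) = 0
        rw [map_sub, map_mul, psi_F g gbar hgbar, hr, hc, hsum, hc1z]
        ring
      have hmem : p - Fbig gbar * r ∈ J0 := ker_psi_le hker
      have hJle : J0 ≤ Ideal.span (G1 ∪ G2 ∪ {Fbig gbar}) :=
        Ideal.span_mono Set.subset_union_left
      have hF : Fbig gbar ∈ Ideal.span (G1 ∪ G2 ∪ {Fbig gbar}) :=
        Ideal.subset_span (Or.inr rfl)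
      have hps : p = (p - Fbig gbar * r) + Fbig gbar * r := by ring
      rw [hps]
      exact add_mem (hJle hmem) (Ideal.mul_mem_right _ _ hF)
    · rw [Ideal.span_le]
      rintro q hq
      rw [SetLike.mem_coe, RingHom.mem_ker]
      rcases hq with (⟨i, j, rfl⟩ | ⟨i, j, k, l, rfl⟩) | hq
      · show stmt6phi g _ = 0
        rw [phi_eq g]
        show Ideal.Quotient.mkₐ ℂ (Ideal.span {fS g})
          (ψ (X (Sum.inl (i, j)) - X (Sum.inl (j, i)))) = 0
        have hz : ψ (X (Sum.inl (i, j)) - X (Sum.inl (j, i))) = 0 := by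
          rw [map_sub, psi_X, psi_X, wv_swap, sub_self]
        rw [hz, map_zero]
      · show stmt6phi g _ = 0
        rw [phi_eq g]
        show Ideal.Quotient.mkₐ ℂ (Ideal.span {fS g})
          (ψ (X (Sum.inl (i, j)) * X (Sum.inl (k, l))
            - X (Sum.inl (i, l)) * X (Sum.inl (k, j)))) = 0
        have hz : ψ (X (Sum.inl (i, j)) * X (Sum.inl (k, l))
            - X (Sum.inl (i, l)) * X (Sum.inl (k, j))) = 0 := by
          simp only [map_sub, map_mul, psi_X, monomial_mul, one_mul]
          rw [sub_eq_zero]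
          congr 1
          simp only [wv]
          abel_nf
        rw [hz, map_zero]
      · rw [Set.mem_singleton_iff] at hq
        subst hq
        show stmt6phi g (Fbig gbar) = 0
        rw [phi_eq g]
        show Ideal.Quotient.mk (Ideal.span {fS g}) (ψ (Fbig gbar)) = 0
        rw [psi_F g gbar hgbar]
        exact Ideal.Quotient.eq_zero_iff_mem.mpr (Ideal.subset_span rfl)

end
end
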